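/- Let K be a symmetric convex set in ℝⁿ with 0 < γ(K) < 1 (γ the standard Gaussian measure) and let a = γ(K). Then the in-radius r(K) of K satisfies r(K) ≥ (1/2)·φ^{-1}(a), where φ(t) = (2π)^{-1/2} ∫_{-t}^t e^{-s²/2} ds. -/

import Mathlib

open MeasureTheory Real Set
open scoped ENNReal

/-- The standard Gaussian measure on `ℝⁿ`. -/
noncomputable def stdGaussian (n : ℕ) : Measure (EuclideanSpace ℝ (Fin n)) :=
  volume.withDensity fun x =>
    ENNReal.ofReal ((2 * π) ^ (-(n : ℝ) / 2) * Real.exp (-‖x‖ ^ 2 / 2))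

noncomputable def gdens (s : ℝ) : ℝ := (2 * π) ^ (-(1:ℝ) / 2) * Real.exp (-s ^ 2 / 2)

lemma gdens_pos (s : ℝ) : 0 < gdens s := by
  unfold gdens
  positivity

lemma integrable_gdens : Integrable gdens := by
  have : Integrable (fun s : ℝ => Real.exp (-(1/2 : ℝ) * s ^ 2)) :=
    integrable_exp_neg_mul_sq (by norm_num)
  have h2 := this.const_mul ((2 * π) ^ (-(1:ℝ) / 2))
  refine h2.congr ?_
  filter_upwards with s
  unfold gdens
  ring_nf

lemma integral_gdens : ∫ s, gdens s = 1 := by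
  have h : ∫ s : ℝ, Real.exp (-(1/2 : ℝ) * s ^ 2) = Real.sqrt (π / (1/2)) :=
    integral_gaussian (1/2)
  have h2 : ∫ s, gdens s = (2 * π) ^ (-(1:ℝ) / 2) * ∫ s : ℝ, Real.exp (-(1/2:ℝ) * s ^ 2) := by
    rw [← integral_const_mul]
    congr 1 with s
    unfold gdens
    ring_nf
  rw [h2, h]
  have hpi : (0:ℝ) < 2 * π := by positivity
  rw [show π / (1/2 : ℝ) = 2 * π by ring]
  rw [Real.sqrt_eq_rpow, ← Real.rpow_add hpi]
  norm_num

/-- product factorization of the density -/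
lemma dens_prod (n : ℕ) (x : Fin n → ℝ) :
    (2 * π) ^ (-(n : ℝ) / 2) * Real.exp (-(∑ i, (x i) ^ 2) / 2) = ∏ i, gdens (x i) := by
  unfold gdens
  rw [Finset.prod_mul_distrib, Finset.prod_const, ← Real.exp_sum]
  congr 1
  · rw [← Real.rpow_natCast ((2 * π) ^ (-(1:ℝ)/2)) (Finset.univ.card),
      ← Real.rpow_mul (by positivity)]
    congr 1
    simp
    ring
  · congr 1
    rw [← Finset.sum_div, ← Finset.sum_neg_distrib]

lemma norm_sq_eq (n : ℕ) (z : EuclideanSpace ℝ (Fin n)) : ‖z‖ ^ 2 = ∑ i, (z i) ^ 2 := by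
  rw [EuclideanSpace.norm_eq, Real.sq_sqrt (by positivity)]
  simp [sq_abs]

lemma gauss_strip (n : ℕ) (u : EuclideanSpace ℝ (Fin n)) (hu : ‖u‖ = 1) (c : ℝ) (hc : 0 ≤ c) :
    stdGaussian n {y | |(inner ℝ u y : ℝ)| ≤ c}
      = ENNReal.ofReal (∫ s in (-c)..c, gdens s) := by
  have hn : NeZero n := by
    constructor
    rintro rfl
    have : u = 0 := Subsingleton.elim u 0
    rw [this, norm_zero] at hu
    norm_num at hu
  -- orthonormal basis with b 0 = u
  obtain ⟨b, hb⟩ : ∃ b : OrthonormalBasis (Fin n) ℝ (EuclideanSpace ℝ (Fin n)), b 0 = u := by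
    have hcard : Module.finrank ℝ (EuclideanSpace ℝ (Fin n)) = Fintype.card (Fin n) := by
      simp [finrank_euclideanSpace_fin]
    have horth : Orthonormal ℝ (({0} : Set (Fin n)).restrict (fun _ : Fin n => u)) := by
      constructor
      · intro i; simpa [Set.restrict] using hu
      · intro i j hij
        exfalso
        apply hij
        ext
        rw [show (i : Fin n) = 0 from i.2, show (j : Fin n) = 0 from j.2]
    obtain ⟨b, hb⟩ := horth.exists_orthonormalBasis_extension_of_card_eq hcard
    exact ⟨b, hb 0 rfl⟩
  -- the strip as preimage
  have hrepr : ∀ y, (inner ℝ u y : ℝ) = b.repr y 0 := by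
    intro y; rw [b.repr_apply_apply, hb]
  set T : Set (EuclideanSpace ℝ (Fin n)) := (fun z : EuclideanSpace ℝ (Fin n) => z 0) ⁻¹' (Icc (-c) c) with hT_def
  set T' : Set (Fin n → ℝ) := (fun x : Fin n → ℝ => x 0) ⁻¹' (Icc (-c) c) with hT'_def
  have hT'm : MeasurableSet T' := (measurable_pi_apply 0) measurableSet_Icc
  have hTm : MeasurableSet T := by
    have : Measurable fun z : EuclideanSpace ℝ (Fin n) => z 0 :=
      (measurable_pi_apply 0).comp (MeasurableEquiv.toLp 2 (Fin n → ℝ)).symm.measurable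
    exact this measurableSet_Icc
  have hset : {y : EuclideanSpace ℝ (Fin n) | |(inner ℝ u y : ℝ)| ≤ c} = (⇑b.repr) ⁻¹' T := by
    ext y
    simp only [Set.mem_setOf_eq, Set.mem_preimage, hT_def, Set.mem_Icc, hrepr, abs_le]
  rw [hset]
  -- step 1: rotate
  set F : EuclideanSpace ℝ (Fin n) → ℝ≥0∞ :=
    fun z => ENNReal.ofReal ((2 * π) ^ (-(n : ℝ) / 2) * Real.exp (-‖z‖ ^ 2 / 2)) with hF_def
  have hFm : Measurable F := by
    apply Measurable.ennreal_ofReal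
    exact (continuous_const.mul ((continuous_norm.pow 2).neg.div_const 2).rexp).measurable
  have hmr : Measurable (⇑b.repr) := b.repr.continuous.measurable
  have step1 : stdGaussian n ((⇑b.repr) ⁻¹' T) = ∫⁻ z in T, F z ∂volume := by
    rw [stdGaussian, withDensity_apply _ (hTm.preimage hmr)]
    have : ∀ y : EuclideanSpace ℝ (Fin n), F (b.repr y)
        = ENNReal.ofReal ((2 * π) ^ (-(n : ℝ) / 2) * Real.exp (-‖y‖ ^ 2 / 2)) := by
      intro y; rw [hF_def]; simp
    rw [← b.measurePreserving_repr.setLIntegral_comp_preimage hTm hFm]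
    exact setLIntegral_congr_fun (hTm.preimage hmr)
      (fun y _ => (this y).symm)
  -- step 2: to pi space
  set G : (Fin n → ℝ) → ℝ≥0∞ := fun x => ENNReal.ofReal (∏ i, gdens (x i)) with hG_def
  have hGm : Measurable G := by
    apply Measurable.ennreal_ofReal
    exact Finset.measurable_prod _ fun i _ =>
      (continuous_const.mul (((continuous_apply i).pow 2).neg.div_const 2).rexp).measurable
  have step2 : ∫⁻ z in T, F z ∂volume = ∫⁻ x in T', G x ∂volume := by
    have hpre : T = (MeasurableEquiv.toLp 2 (Fin n → ℝ)).symm ⁻¹' T' := rfl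
    rw [hpre, ← (EuclideanSpace.volume_preserving_symm_measurableEquiv_toLp (Fin n)).setLIntegral_comp_preimage hT'm hGm]
    apply setLIntegral_congr_fun (hpre ▸ hTm)
    intro z _
    rw [hF_def, hG_def]
    have : ∀ i, (MeasurableEquiv.toLp 2 (Fin n → ℝ)).symm z i = z i := fun i => rfl
    simp only [this]
    rw [norm_sq_eq, dens_prod]
  -- step 3: to Bochner integral
  have hprod_int : Integrable (fun x : Fin n → ℝ => ∏ i, gdens (x i)) :=
    Integrable.fintype_prod (f := fun _ : Fin n => gdens) fun _ => integrable_gdens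
  have step3 : ∫⁻ x in T', G x ∂volume
      = ENNReal.ofReal (∫ x in T', ∏ i, gdens (x i)) := by
    rw [hG_def, ← ofReal_integral_eq_lintegral_ofReal hprod_int.integrableOn
      (Filter.Eventually.of_forall fun x => Finset.prod_nonneg fun i _ => (gdens_pos _).le)]
  -- step 4: Fubini
  classical
  set f : Fin n → ℝ → ℝ := fun i => if i = 0 then (Icc (-c) c).indicator gdens else gdens with hf_def
  have step4 : ∫ x in T', ∏ i, gdens (x i) = ∫ x : Fin n → ℝ, ∏ i, f i (x i) := by
    rw [← integral_indicator hT'm]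
    congr 1 with x
    have h1 : ∏ i, f i (x i) = f 0 (x 0) * ∏ i ∈ Finset.univ.erase 0, f i (x i) :=
      (Finset.mul_prod_erase _ _ (Finset.mem_univ 0)).symm
    have h2 : ∏ i, gdens (x i) = gdens (x 0) * ∏ i ∈ Finset.univ.erase 0, gdens (x i) :=
      (Finset.mul_prod_erase _ _ (Finset.mem_univ 0)).symm
    have h3 : ∏ i ∈ Finset.univ.erase 0, f i (x i) = ∏ i ∈ Finset.univ.erase 0, gdens (x i) := by
      apply Finset.prod_congr rfl
      intro i hi
      rw [hf_def]
      simp [Finset.ne_of_mem_erase hi]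
    have hf0 : f 0 = (Icc (-c) c).indicator gdens := by rw [hf_def]; simp
    by_cases hx : x ∈ T'
    · rw [Set.indicator_of_mem hx, h1, h2, h3, hf0,
        Set.indicator_of_mem (by exact hx)]
    · rw [Set.indicator_of_notMem hx, h1, h3, hf0,
        Set.indicator_of_notMem (by exact hx), zero_mul]
  have step5 : ∫ x : Fin n → ℝ, ∏ i, f i (x i) = ∏ i, ∫ s, f i s := by
    exact MeasureTheory.integral_fintype_prod_eq_prod f
  have step6 : ∏ i, ∫ s, f i s = ∫ s in Icc (-c) c, gdens s := by
    rw [← Finset.mul_prod_erase _ _ (Finset.mem_univ 0)]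
    have h3 : ∏ i ∈ Finset.univ.erase 0, ∫ s, f i s = 1 := by
      apply Finset.prod_eq_one
      intro i hi
      rw [hf_def]
      simp only [Finset.ne_of_mem_erase hi, if_false]
      exact integral_gdens
    have hf0 : f 0 = (Icc (-c) c).indicator gdens := by rw [hf_def]; simp
    rw [h3, mul_one, hf0, integral_indicator measurableSet_Icc]
  have step7 : ∫ s in Icc (-c) c, gdens s = ∫ s in (-c)..c, gdens s := by
    rw [intervalIntegral.integral_of_le (by linarith), integral_Icc_eq_integral_Ioc]
  rw [step1, step2, step3, step4, step5, step6, step7]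

lemma continuous_gdens : Continuous gdens := by
  unfold gdens; fun_prop

/-- A symmetric convex set of Gaussian measure `a ∈ (0,1)` contains the centered ball of
radius `φ⁻¹(a)/2`, where `φ(w)` is the Gaussian measure of the symmetric strip of
half-width `w`. -/
theorem stmt12 (n : ℕ) (K : Set (EuclideanSpace ℝ (Fin n)))
    (hconv : Convex ℝ K) (hsym : ∀ x ∈ K, -x ∈ K) (hmeas : MeasurableSet K)
    (h0 : 0 < stdGaussian n K) (h1 : stdGaussian n K < 1)
    (w : ℝ) (hw : 0 ≤ w)
    (hφ : (∫ s in (-w)..w, (2 * π) ^ (-(1:ℝ) / 2) * Real.exp (-s ^ 2 / 2))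
      = (stdGaussian n K).toReal) :
    Metric.ball (0 : EuclideanSpace ℝ (Fin n)) (w / 2) ⊆ K := by
  intro x hx
  by_contra hxK
  -- K has nonempty interior
  have hint : (interior K).Nonempty := by
    by_contra h
    rw [not_nonempty_iff_eq_empty] at h
    have hspan : affineSpan ℝ K ≠ ⊤ := fun htop => by
      have := hconv.interior_nonempty_iff_affineSpan_eq_top.mpr htop
      rw [h] at this
      exact Set.not_nonempty_empty this
    have hvol : volume K = 0 :=
      measure_mono_null (subset_affineSpan ℝ K) (Measure.addHaar_affineSubspace _ _ hspan)
    have : stdGaussian n K = 0 := by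
      rw [stdGaussian]
      exact (withDensity_absolutelyContinuous volume _) hvol
    exact h0.ne' this
  -- 0 ∈ interior K
  have h0mem : (0 : EuclideanSpace ℝ (Fin n)) ∈ interior K := by
    obtain ⟨z, hz⟩ := hint
    have hzK : -z ∈ interior K := by
      have hKsymm : -K = K := by
        ext y
        rw [Set.mem_neg]
        constructor
        · intro hy; simpa using hsym _ hy
        · intro hy; exact hsym _ hy
      have himg := (Homeomorph.neg (EuclideanSpace ℝ (Fin n))).image_interior K
      have hco : ∀ s : Set (EuclideanSpace ℝ (Fin n)),
          (⇑(Homeomorph.neg (EuclideanSpace ℝ (Fin n)))) '' s = -s := by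
        intro s
        rw [← Set.image_neg_eq_neg]
        rfl
      rw [hco, hco] at himg
      rw [hKsymm] at himg
      rw [← himg]
      exact Set.neg_mem_neg.mpr hz
    have := hconv.interior hz hzK (by norm_num : (0:ℝ) ≤ 1/2) (by norm_num : (0:ℝ) ≤ 1/2)
      (by norm_num)
    simpa [smul_neg] using this
  have hxint : x ∉ interior K := fun h => hxK (interior_subset h)
  obtain ⟨f, hf⟩ := geometric_hahn_banach_open_point hconv.interior isOpen_interior hxint
  have hfx : 0 < f x := by simpa using hf 0 h0mem
  -- every point of K satisfies f y ≤ f x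
  have hfK : ∀ y ∈ K, f y ≤ f x := by
    intro y hy
    by_contra h
    push_neg at h
    have hfy : 0 < f y := lt_trans hfx h
    set t : ℝ := (f x / f y + 1) / 2 with ht_def
    have hr : 0 < f x / f y := div_pos hfx hfy
    have hr1 : f x / f y < 1 := (div_lt_one hfy).2 h
    have ht0 : 0 < t := by rw [ht_def]; linarith
    have ht1 : t < 1 := by rw [ht_def]; linarith
    have hmem : (1 - t) • (0 : EuclideanSpace ℝ (Fin n)) + t • y ∈ interior K :=
      hconv.combo_interior_self_mem_interior h0mem hy (by linarith) ht0.le (by ring)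
    have hlt := hf _ hmem
    rw [smul_zero, zero_add, _root_.map_smul, smul_eq_mul] at hlt
    have : f x / f y < t := by rw [ht_def]; linarith
    have : f x < t * f y := by
      calc f x = (f x / f y) * f y := by field_simp
      _ < t * f y := by exact mul_lt_mul_of_pos_right this hfy
    linarith
  have hfabs : ∀ y ∈ K, |f y| ≤ f x := by
    intro y hy
    rw [abs_le]
    constructor
    · have := hfK _ (hsym y hy)
      rw [map_neg] at this
      linarith
    · exact hfK y hy
  have hfne : f ≠ 0 := by
    intro h
    rw [h] at hfx
    simp at hfx
  have hfnorm : 0 < ‖f‖ := norm_pos_iff.2 hfne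
  set u := (InnerProductSpace.toDual ℝ (EuclideanSpace ℝ (Fin n))).symm (‖f‖⁻¹ • f) with hu_def
  have hunorm : ‖u‖ = 1 := by
    rw [hu_def, LinearIsometryEquiv.norm_map, norm_smul, norm_inv, norm_norm,
      inv_mul_cancel₀ hfnorm.ne']
  have hinner : ∀ y, (inner ℝ u y : ℝ) = ‖f‖⁻¹ * f y := by
    intro y
    rw [hu_def, InnerProductSpace.toDual_symm_apply]
    simp
  set c : ℝ := ‖f‖⁻¹ * f x with hc_def
  have hc0 : 0 < c := by positivity
  have hcw : c < w / 2 := by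
    have hb : f x ≤ ‖f‖ * ‖x‖ := by
      calc f x ≤ |f x| := le_abs_self _
      _ = ‖f x‖ := (Real.norm_eq_abs _).symm
      _ ≤ ‖f‖ * ‖x‖ := f.le_opNorm x
    have hxw : ‖x‖ < w / 2 := by
      simpa [dist_zero_right] using (Metric.mem_ball.1 hx)
    calc c = ‖f‖⁻¹ * f x := hc_def
    _ ≤ ‖f‖⁻¹ * (‖f‖ * ‖x‖) := by
        exact mul_le_mul_of_nonneg_left hb (inv_nonneg.2 hfnorm.le)
    _ = ‖x‖ := by field_simp
    _ < w / 2 := hxw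
  have hsub : K ⊆ {y | |(inner ℝ u y : ℝ)| ≤ c} := by
    intro y hy
    rw [Set.mem_setOf_eq, hinner, abs_mul, abs_inv, abs_norm, hc_def]
    exact mul_le_mul_of_nonneg_left (hfabs y hy) (inv_nonneg.2 hfnorm.le)
  have hmono : stdGaussian n K ≤ stdGaussian n {y | |(inner ℝ u y : ℝ)| ≤ c} :=
    measure_mono hsub
  rw [gauss_strip n u hunorm c hc0.le] at hmono
  -- rewrite measure of K
  have hint_eq : (∫ s in (-w)..w, (2 * π) ^ (-(1:ℝ) / 2) * Real.exp (-s ^ 2 / 2))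
      = ∫ s in (-w)..w, gdens s := by rfl
  have hKval : stdGaussian n K = ENNReal.ofReal (∫ s in (-w)..w, gdens s) := by
    rw [← hint_eq, hφ, ENNReal.ofReal_toReal (lt_top_iff_ne_top.1 (h1.trans (by norm_num)))]
  rw [hKval] at hmono
  have hcnn : (0:ℝ) ≤ ∫ s in (-c)..c, gdens s :=
    intervalIntegral.integral_nonneg (by linarith) (fun s _ => (gdens_pos s).le)
  have key : (∫ s in (-w)..w, gdens s) ≤ ∫ s in (-c)..c, gdens s :=
    (ENNReal.ofReal_le_ofReal_iff hcnn).1 hmono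
  -- strict inequality the other way
  have hcw' : c < w := by linarith
  have hii : ∀ a b : ℝ, IntervalIntegrable gdens volume a b :=
    fun a b => continuous_gdens.intervalIntegrable a b
  have hsplit1 : (∫ s in (-w)..w, gdens s)
      = (∫ s in (-w)..(-c), gdens s) + ∫ s in (-c)..w, gdens s :=
    (intervalIntegral.integral_add_adjacent_intervals (hii _ _) (hii _ _)).symm
  have hsplit2 : (∫ s in (-c)..w, gdens s)
      = (∫ s in (-c)..c, gdens s) + ∫ s in c..w, gdens s :=
    (intervalIntegral.integral_add_adjacent_intervals (hii _ _) (hii _ _)).symm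
  have hp1 : 0 < ∫ s in (-w)..(-c), gdens s :=
    intervalIntegral.intervalIntegral_pos_of_pos_on (hii _ _)
      (fun s _ => gdens_pos s) (by linarith)
  have hp2 : 0 < ∫ s in c..w, gdens s :=
    intervalIntegral.intervalIntegral_pos_of_pos_on (hii _ _)
      (fun s _ => gdens_pos s) hcw'
  linarith [hsplit1, hsplit2]
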